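/- For every j ∈ {1, 2, 3} (indices modulo 3): D³φ_M^4[t_{j−1}, t_{j−1}, t_{j+1}] = 2/(|e_{j+1}| |e_{j−1}|²); and for i ∈ {1, 2, 3}, D³φ_M^i[t_{j−1}, t_{j−1}, t_{j+1}] equals −2/(|e_{j+1}| |e_{j−1}|²) if i = j+1, equals 0 if i = j, and equals 2/(|e_{j+1}| |e_{j−1}|²) if i = j−1. -/

import Mathlib

noncomputable section
open MeasureTheory

namespace PaperStmt

/-- Euclidean dot product on `ℝ²`. -/
def dotp (v w : ℝ × ℝ) : ℝ := v.1 * w.1 + v.2 * w.2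

/-- Euclidean length on `ℝ²`. -/
def len (v : ℝ × ℝ) : ℝ := Real.sqrt (v.1 ^ 2 + v.2 ^ 2)

/-- Cross product (determinant) of two planar vectors. -/
def crossp (v w : ℝ × ℝ) : ℝ := v.1 * w.2 - v.2 * w.1

/-- The vertices `p 0, p 1, p 2` form a nondegenerate triangle listed counterclockwise. -/
def Ccw (p : Fin 3 → ℝ × ℝ) : Prop := 0 < crossp (p 1 - p 0) (p 2 - p 0)

/-- Vector of the edge `e_i` opposite vertex `p i`, oriented counterclockwise
(from `p (i+1)` to `p (i−1)`). -/
def edgeVec (p : Fin 3 → ℝ × ℝ) (i : Fin 3) : ℝ × ℝ := p (i - 1) - p (i + 1)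

/-- Length `|e_i|` of the edge opposite vertex `p i`. -/
def elen (p : Fin 3 → ℝ × ℝ) (i : Fin 3) : ℝ := len (edgeVec p i)

/-- Unit tangent `t_i = (p_{i−1} − p_{i+1})/|e_i|` of edge `e_i`. -/
def tvec (p : Fin 3 → ℝ × ℝ) (i : Fin 3) : ℝ × ℝ := (elen p i)⁻¹ • edgeVec p i

/-- Outward unit normal `n_i` of edge `e_i` (clockwise rotation of the tangent,
which points outward for a counterclockwise triangle). -/
def nvec (p : Fin 3 → ℝ × ℝ) (i : Fin 3) : ℝ × ℝ := ((tvec p i).2, -(tvec p i).1)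

/-- Interior angle `θ_i` of the triangle at the vertex `p i`. -/
def angleAt (p : Fin 3 → ℝ × ℝ) (i : Fin 3) : ℝ :=
  Real.arccos (dotp (p (i + 1) - p i) (p (i - 1) - p i) /
    (len (p (i + 1) - p i) * len (p (i - 1) - p i)))

/-- Outer product `v wᵀ` of two planar (column) vectors, as a `2 × 2` matrix. -/
def outerProd (v w : ℝ × ℝ) : Matrix (Fin 2) (Fin 2) ℝ :=
  !![v.1 * w.1, v.1 * w.2; v.2 * w.1, v.2 * w.2]

/-- Basis matrices `φ_HHJ^i = −(1/(2 sin θ_{i−1} sin θ_{i+1})) (t_{i−1} t_{i+1}ᵀ + t_{i+1} t_{i−1}ᵀ)`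
of the lowest-order Hellan–Herrmann–Johnson element. -/
def phiHHJ (p : Fin 3 → ℝ × ℝ) (i : Fin 3) : Matrix (Fin 2) (Fin 2) ℝ :=
  (-(2 * Real.sin (angleAt p (i - 1)) * Real.sin (angleAt p (i + 1)))⁻¹) •
    (outerProd (tvec p (i - 1)) (tvec p (i + 1)) + outerProd (tvec p (i + 1)) (tvec p (i - 1)))

/-- The quadratic form `vᵀ τ v` of a `2 × 2` matrix on a planar vector. -/
def qf (τ : Matrix (Fin 2) (Fin 2) ℝ) (v : ℝ × ℝ) : ℝ :=
  v.1 * (τ 0 0 * v.1 + τ 0 1 * v.2) + v.2 * (τ 1 0 * v.1 + τ 1 1 * v.2)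

end PaperStmt

namespace PaperStmt

/-- Directional derivative of `f` along `v`. -/
def dderiv (v : ℝ × ℝ) (f : ℝ × ℝ → ℝ) : ℝ × ℝ → ℝ := fun x => fderiv ℝ f x v

/-- Second directional derivative `D²f[u, v]`. -/
def d2 (u v : ℝ × ℝ) (f : ℝ × ℝ → ℝ) : ℝ × ℝ → ℝ := dderiv u (dderiv v f)

/-- Third directional derivative `D³f[u, v, w]`. -/
def d3 (u v w : ℝ × ℝ) (f : ℝ × ℝ → ℝ) : ℝ × ℝ → ℝ := dderiv u (dderiv v (dderiv w f))

/-- `ψ` is the family of barycentric coordinates of the triangle with vertices `p`: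
affine functions with `ψ i (p j) = δ_{ij}`. -/
def IsBarycentric (p : Fin 3 → ℝ × ℝ) (ψ : Fin 3 → ℝ × ℝ → ℝ) : Prop :=
  (∀ i : Fin 3, ∃ a b c : ℝ, ∀ x : ℝ × ℝ, ψ i x = a * x.1 + b * x.2 + c) ∧
  (∀ i j : Fin 3, ψ i (p j) = if i = j then 1 else 0)

/-- Morley bubble `φ_M^i = ψ_{i−1}² ψ_{i+1}` for `i = 1, 2, 3`. -/
def phiM3 (ψ : Fin 3 → ℝ × ℝ → ℝ) (i : Fin 3) : ℝ × ℝ → ℝ :=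
  fun x => (ψ (i - 1) x) ^ 2 * ψ (i + 1) x

/-- Morley bubble `φ_M^4 = ψ₁ ψ₂ ψ₃`. -/
def phiM4 (ψ : Fin 3 → ℝ × ℝ → ℝ) : ℝ × ℝ → ℝ :=
  fun x => ψ 0 x * ψ 1 x * ψ 2 x

/-- The four Morley bubbles `φ_M^1, φ_M^2, φ_M^3, φ_M^4`. -/
def phiM (ψ : Fin 3 → ℝ × ℝ → ℝ) : Fin 4 → ℝ × ℝ → ℝ :=
  ![phiM3 ψ 0, phiM3 ψ 1, phiM3 ψ 2, phiM4 ψ]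

end PaperStmt

/-! The proof is a direct computation. Each barycentric coordinate is affine, `ψ i = ℓ i + c i`
with `ℓ i` linear, so every Morley bubble is a product of three affine functions and its third
derivative is the constant symmetrization of the three linear parts. Moreover
`ℓ i (p (k-1) - p (k+1)) = ψ i (p (k-1)) - ψ i (p (k+1))`, so `ℓ i (t k)` is
`±1/|e k|` when `i = k ∓ 1` and `0` when `i = k`; substituting these values gives each case. -/

namespace PaperStmt

theorem d3_affine_mul_affine_mul_affine (ℓ₁ ℓ₂ ℓ₃ : ℝ × ℝ →L[ℝ] ℝ) (c₁ c₂ c₃ : ℝ)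
    (u v w x : ℝ × ℝ) :
    d3 u v w (fun y => (ℓ₁ y + c₁) * (ℓ₂ y + c₂) * (ℓ₃ y + c₃)) x =
      ℓ₁ u * (ℓ₂ v * ℓ₃ w + ℓ₃ v * ℓ₂ w) + ℓ₂ u * (ℓ₁ v * ℓ₃ w + ℓ₃ v * ℓ₁ w) +
        ℓ₃ u * (ℓ₁ v * ℓ₂ w + ℓ₂ v * ℓ₁ w) := by
  unfold d3 dderiv
  simp (disch := fun_prop) only [fderiv_fun_mul, fderiv_fun_add, fderiv_const_apply,
    ContinuousLinearMap.fderiv, add_apply, smul_apply, zero_apply, smul_eq_mul]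
  ring

namespace IsBarycentric

variable {p : Fin 3 → ℝ × ℝ}

theorem exists_eq_linear_add_const {ψ : Fin 3 → ℝ × ℝ → ℝ} (hψ : IsBarycentric p ψ) :
    ∃ (ℓ : Fin 3 → ℝ × ℝ →L[ℝ] ℝ) (c : Fin 3 → ℝ), ψ = fun i y => ℓ i y + c i := by
  choose a b c hrep using hψ.1
  refine ⟨fun i => a i • ContinuousLinearMap.fst ℝ ℝ ℝ + b i • ContinuousLinearMap.snd ℝ ℝ ℝ,
    c, funext₂ fun i y => ?_⟩
  simp [hrep]

theorem linear_apply_tvec {ℓ : Fin 3 → ℝ × ℝ →L[ℝ] ℝ} {c : Fin 3 → ℝ}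
    (hψ : IsBarycentric p fun i y => ℓ i y + c i) (i k : Fin 3) :
    ℓ i (tvec p k) =
      (elen p k)⁻¹ * ((if i = k - 1 then 1 else 0) - (if i = k + 1 then 1 else 0)) := by
  rw [tvec, map_smul, smul_eq_mul, ← hψ.2 i (k - 1), ← hψ.2 i (k + 1), edgeVec, map_sub]
  ring

end IsBarycentric

end PaperStmt

open PaperStmt in
theorem morley_bubble_third_deriv_mixed_general
    (p : Fin 3 → ℝ × ℝ)
    (ψ : Fin 3 → ℝ × ℝ → ℝ) (hψ : IsBarycentric p ψ)
    (j : Fin 3) :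
    (∀ x : ℝ × ℝ,
      d3 (tvec p (j - 1)) (tvec p (j - 1)) (tvec p (j + 1)) (phiM4 ψ) x =
        2 / (elen p (j + 1) * elen p (j - 1) ^ 2)) ∧
    (∀ i : Fin 3, ∀ x : ℝ × ℝ,
      d3 (tvec p (j - 1)) (tvec p (j - 1)) (tvec p (j + 1)) (phiM3 ψ i) x =
        if i = j + 1 then -2 / (elen p (j + 1) * elen p (j - 1) ^ 2)
        else if i = j then 0
        else 2 / (elen p (j + 1) * elen p (j - 1) ^ 2)) := by
  obtain ⟨ℓ, c, rfl⟩ := hψ.exists_eq_linear_add_const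
  refine ⟨fun x => ?_, fun i x => ?_⟩
  · unfold phiM4
    rw [d3_affine_mul_affine_mul_affine]
    simp only [hψ.linear_apply_tvec]
    fin_cases j <;> simp +decide only [Fin.isValue, ↓reduceIte] <;> ring
  · unfold phiM3
    simp only [sq]
    rw [d3_affine_mul_affine_mul_affine]
    simp only [hψ.linear_apply_tvec]
    fin_cases i <;> fin_cases j <;> simp +decide only [Fin.isValue, ↓reduceIte] <;> ring

open PaperStmt in
/-- Mixed third directional derivatives of the Morley bubbles:
`D³φ_M^4[t_{j−1}, t_{j−1}, t_{j+1}] = 2/(|e_{j+1}| |e_{j−1}|²)`, and for `i = 1, 2, 3`,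
`D³φ_M^i[t_{j−1}, t_{j−1}, t_{j+1}]` equals `−2/(|e_{j+1}| |e_{j−1}|²)` if `i = j+1`,
`0` if `i = j`, and `2/(|e_{j+1}| |e_{j−1}|²)` if `i = j−1`. -/
theorem morley_bubble_third_deriv_mixed
    (p : Fin 3 → ℝ × ℝ) (hp : Ccw p)
    (ψ : Fin 3 → ℝ × ℝ → ℝ) (hψ : IsBarycentric p ψ)
    (j : Fin 3) :
    (∀ x : ℝ × ℝ,
      d3 (tvec p (j - 1)) (tvec p (j - 1)) (tvec p (j + 1)) (phiM4 ψ) x =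
        2 / (elen p (j + 1) * elen p (j - 1) ^ 2)) ∧
    (∀ i : Fin 3, ∀ x : ℝ × ℝ,
      d3 (tvec p (j - 1)) (tvec p (j - 1)) (tvec p (j + 1)) (phiM3 ψ i) x =
        if i = j + 1 then -2 / (elen p (j + 1) * elen p (j - 1) ^ 2)
        else if i = j then 0
        else 2 / (elen p (j + 1) * elen p (j - 1) ^ 2)) :=
  morley_bubble_third_deriv_mixed_general p ψ hψ j
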